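/- arXiv:math/9201290 — 3 statements merged into one kernel-verified Lean document; each statement's English description precedes it below -/
import Mathlib

section
/- Let f : [0,1] → [0,1] be a continuous transitive map. Then f^2 has an L-scheme: there exist a point x with f^2(x) = x and a point y such that either f^4(y) ≤ x < y < f^2(y) or f^2(y) < y < x ≤ f^4(y). -/
/-!
Baire's theorem gives a point `x₀` whose `f`-orbit accumulates at every point of `[0, 1]`. Write
`g = f^[2]` and `ω(y)` for the set of accumulation points of the `g`-orbit of `y`.

The basic tool is a trap: a closed `g`-invariant set containing one point of the orbit of `y`
contains `ω(y)`. If `[a, b] ⊆ ω(y)` and `g` has no L-scheme, trapping forces a rigid shape: a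
unique interior fixed point `c`, `g t > t` on `(a, c)` and `g t < t` on `(c, b)`, and points of
`[a, c]` and `[c, b]` sent to `b` and `a`. A fixed endpoint then yields an L-scheme at once; for
`g = f^[2]` with `f c = c` and no fixed endpoint, chasing these points through `f` produces a point
of `(a, c)` that `g` sends to `a`, which is absurd.

Since `[0, 1] ⊆ ω(x₀) ∪ ω(f x₀)` and `f` swaps the two sets, either one of them contains `[0, 1]`,
or the component of `c` in `ω(x₀)` is a nondegenerate `g`-invariant interval with endpoint `c`
(finitely many `g`-images of one interval component of `ω(x₀)` cover `ω(x₀)`, and the one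
containing `c` also contains an orbit point), and the fixed-endpoint case applies there.
Mirror-image statements come from conjugating by `t ↦ a + b - t`.
-/

open Set Function

/-- Topological transitivity of `f` on `[0,1]` (relative topology). -/
def TransitiveOnI (f : ℝ → ℝ) : Prop :=
  ∀ U V : Set ℝ, IsOpen U → IsOpen V → (U ∩ Icc 0 1).Nonempty →
    (V ∩ Icc 0 1).Nonempty → ∃ n : ℕ, (f^[n] '' (U ∩ Icc 0 1) ∩ V).Nonempty

open Filter Topology

theorem IsPreconnected.lt_apply_of_lt_apply {h : ℝ → ℝ} {s : Set ℝ} {u v : ℝ}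
    (hs : IsPreconnected s) (hc : Continuous h) (hfix : ∀ t ∈ s, ¬IsFixedPt h t) (hu : u ∈ s)
    (hv : v ∈ s) (huh : u < h u) : v < h v := by
  by_contra hvh
  obtain ⟨z, hz, hz0⟩ := hs.intermediate_value hv hu (f := fun t => h t - t)
    (hc.sub continuous_id).continuousOn (show (0 : ℝ) ∈ Icc (h v - v) (h u - u) from
      ⟨by linarith, by linarith⟩)
  exact hfix z hz (sub_eq_zero.1 hz0)

theorem IsClosed.connectedComponentIn {α : Type*} [TopologicalSpace α] {F : Set α}
    (hF : IsClosed F) (x : α) : IsClosed (connectedComponentIn F x) := by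
  by_cases hx : x ∈ F
  · exact closure_subset_iff_isClosed.1 <| isPreconnected_connectedComponentIn.closure
      |>.subset_connectedComponentIn (subset_closure (mem_connectedComponentIn hx))
        (closure_minimal (connectedComponentIn_subset _ _) hF)
  · rw [connectedComponentIn_eq_empty hx]; exact isClosed_empty

theorem exists_Ioo_subset_of_mem_nhds {a b y : ℝ} {s : Set ℝ} (hab : a < b) (hy : y ∈ Icc a b)
    (hs : s ∈ 𝓝 y) : ∃ p q, a ≤ p ∧ p < q ∧ q ≤ b ∧ Ioo p q ⊆ s := by
  obtain ⟨ε, hε, hball⟩ := Metric.mem_nhds_iff.1 hs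
  refine ⟨max a (y - ε / 2), min b (y + ε / 2), le_max_left _ _, ?_, min_le_left _ _,
    fun t ht => hball ?_⟩
  · simp only [max_lt_iff, lt_min_iff]
    refine ⟨⟨hab, ?_⟩, ?_, ?_⟩ <;> linarith [hy.1, hy.2]
  · rw [Metric.mem_ball, Real.dist_eq, abs_sub_lt_iff]
    constructor <;> linarith [ht.1, ht.2, le_max_right a (y - ε / 2), min_le_right b (y + ε / 2)]

namespace IntervalDynamics

def limitSet (h : ℝ → ℝ) (x : ℝ) : Set ℝ := {y | MapClusterPt y atTop fun n => h^[n] x}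

def HasLScheme (h : ℝ → ℝ) (a b : ℝ) : Prop :=
  ∃ x ∈ Icc a b, ∃ y ∈ Icc a b, IsFixedPt h x ∧
    ((h (h y) ≤ x ∧ x < y ∧ y < h y) ∨ (h y < y ∧ y < x ∧ x ≤ h (h y)))

def reflect (a b : ℝ) (h : ℝ → ℝ) (t : ℝ) : ℝ := a + b - h (a + b - t)

section LimitSet

variable {h : ℝ → ℝ} {x : ℝ}

theorem isClosed_limitSet : IsClosed (limitSet h x) := isClosed_setOfPred_clusterPt

theorem limitSet_iterate (n : ℕ) : limitSet h (h^[n] x) = limitSet h x := by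
  have : (fun k => h^[k] (h^[n] x)) = (fun k => h^[k] x) ∘ (· + n) := by
    funext k; simp [iterate_add_apply]
  ext y
  simp only [limitSet, mem_ofPred_eq, this, mapClusterPt_comp, map_add_atTop_eq_nat]

theorem limitSet_subset_of_mapsTo {S : Set ℝ} (hS : IsClosed S) (hmaps : MapsTo h S S) {n : ℕ}
    (hn : h^[n] x ∈ S) : limitSet h x ⊆ S := by
  rw [← limitSet_iterate n, ← hS.closure_eq]
  exact fun y hy => hy.clusterPt.mem_closure_of_mem S <|
    mem_map.2 <| univ_mem' fun k => hmaps.iterate k hn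

theorem mapsTo_limitSet_of_semiconj {φ h' : ℝ → ℝ} (hφ : Continuous φ)
    (hsc : Semiconj φ h h') : MapsTo φ (limitSet h x) (limitSet h' (φ x)) := fun y hy => by
  have := hy.tendsto_comp (hφ.tendsto y)
  simpa only [limitSet, mem_ofPred_eq, Function.comp_def, (hsc.iterate_right _).eq] using this

theorem mapsTo_limitSet (hc : Continuous h) : MapsTo h (limitSet h x) (limitSet h x) := by
  have := mapsTo_limitSet_of_semiconj (x := x) hc (Function.Commute.refl h)
  rwa [show h x = h^[1] x from rfl, limitSet_iterate] at this

theorem limitSet_subset_union (f : ℝ → ℝ) (x : ℝ) :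
    limitSet f x ⊆ limitSet (f^[2]) x ∪ limitSet (f^[2]) (f x) := by
  intro y hy
  by_contra hn
  simp only [mem_union, not_or, limitSet, mem_ofPred_eq, mapClusterPt_iff_frequently,
    not_forall, not_frequently, exists_prop] at hn
  obtain ⟨⟨s₁, hs₁, h₁⟩, ⟨s₂, hs₂, h₂⟩⟩ := hn
  obtain ⟨K₁, hK₁⟩ := eventually_atTop.1 h₁
  obtain ⟨K₂, hK₂⟩ := eventually_atTop.1 h₂
  obtain ⟨n, hmem, hn⟩ := ((hy.frequently (inter_mem hs₁ hs₂)).and_eventually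
    (eventually_ge_atTop (2 * (K₁ + K₂)))).exists
  rcases Nat.even_or_odd' n with ⟨k, rfl | rfl⟩
  · rw [iterate_mul] at hmem
    exact hK₁ k (by omega) hmem.1
  · rw [iterate_succ_apply, iterate_mul] at hmem
    exact hK₂ k (by omega) hmem.2

variable {a b p q : ℝ}

theorem frequently_mem_Ioo (hsub : Icc a b ⊆ limitSet h x) (hp : a ≤ p) (hpq : p < q)
    (hq : q ≤ b) : ∃ᶠ n in atTop, h^[n] x ∈ Ioo p q :=
  (hsub (show (p + q) / 2 ∈ Icc a b by constructor <;> linarith)).frequently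
    (Ioo_mem_nhds (by linarith) (by linarith))

theorem iterate_ne_of_isFixedPt (hab : a < b) (hsub : Icc a b ⊆ limitSet h x) {z : ℝ}
    (hz : IsFixedPt h z) (n : ℕ) : h^[n] x ≠ z := fun hn => by
  have hsingle := hsub.trans <| limitSet_subset_of_mapsTo isClosed_singleton
    (mapsTo_singleton.2 hz) (mem_singleton_iff.2 hn)
  have ha := hsingle (left_mem_Icc.2 hab.le)
  have hb := hsingle (right_mem_Icc.2 hab.le)
  rw [mem_singleton_iff] at ha hb
  exact hab.ne (ha.trans hb.symm)

end LimitSet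

section Reflect

variable {a b x : ℝ} {h : ℝ → ℝ}

theorem continuous_reflect (hc : Continuous h) : Continuous (reflect a b h) := by
  unfold reflect; fun_prop

theorem mapsTo_reflect (hmaps : MapsTo h (Icc a b) (Icc a b)) :
    MapsTo (reflect a b h) (Icc a b) (Icc a b) := fun t ht => by
  have := hmaps (show a + b - t ∈ Icc a b by constructor <;> linarith [ht.1, ht.2])
  constructor <;> simp only [reflect] <;> linarith [this.1, this.2]

theorem Icc_subset_limitSet_reflect (hsub : Icc a b ⊆ limitSet h x) :
    Icc a b ⊆ limitSet (reflect a b h) (a + b - x) := fun y hy => by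
  have hsc : Semiconj (fun t => a + b - t) h (reflect a b h) := fun t => by
    simp [reflect]
  simpa using mapsTo_limitSet_of_semiconj (by fun_prop) hsc
    (hsub (show a + b - y ∈ Icc a b by constructor <;> linarith [hy.1, hy.2]))

theorem HasLScheme.of_reflect (hs : HasLScheme (reflect a b h) a b) : HasLScheme h a b := by
  obtain ⟨x, hx, y, hy, hfix, hxy⟩ := hs
  simp only [IsFixedPt, reflect, sub_sub_cancel] at hfix hxy
  refine ⟨a + b - x, ⟨by linarith [hx.2], by linarith [hx.1]⟩, a + b - y,
    ⟨by linarith [hy.2], by linarith [hy.1]⟩, by simp only [IsFixedPt]; linarith, ?_⟩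
  rcases hxy with hR | hL
  · exact Or.inr ⟨by linarith, by linarith, by linarith⟩
  · exact Or.inl ⟨by linarith, by linarith, by linarith⟩

end Reflect

theorem HasLScheme.mono {h : ℝ → ℝ} {a b a' b' : ℝ} (hs : HasLScheme h a b)
    (hsub : Icc a b ⊆ Icc a' b') : HasLScheme h a' b' := by
  obtain ⟨x, hx, y, hy, hxy⟩ := hs
  exact ⟨x, hsub hx, y, hsub hy, hxy⟩

section Schemes

variable {h : ℝ → ℝ} {a b x u v : ℝ}

theorem hasLScheme_of_cover (hc : Continuous h) (hx : a ≤ x) (hv : v ≤ b) (hfix : IsFixedPt h x)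
    (hxu : x < u) (huv : u < v) (hvu : v ≤ h u) (hvx : h v ≤ x) : HasLScheme h a b := by
  obtain ⟨y, hy, hyv⟩ := intermediate_value_Icc' huv.le hc.continuousOn
    (show v ∈ Icc (h v) (h u) from ⟨by linarith, hvu⟩)
  have hyv' : y < v := hy.2.lt_of_ne fun he => by rw [he] at hyv; linarith
  refine ⟨x, ⟨hx, by linarith⟩, y, ⟨by linarith [hy.1], by linarith⟩, hfix,
    Or.inl ⟨by rwa [hyv], by linarith [hy.1], by rwa [hyv]⟩⟩

theorem hasLScheme_of_cover' (hc : Continuous h) (hv : a ≤ v) (hx : x ≤ b)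
    (hfix : IsFixedPt h x) (hux : u < x) (hvu : v < u) (huv : h u ≤ v) (hxv : x ≤ h v) :
    HasLScheme h a b := by
  refine HasLScheme.of_reflect (hasLScheme_of_cover (continuous_reflect (a := a) (b := b) hc)
    (x := a + b - x) (u := a + b - u) (v := a + b - v) (by linarith) (by linarith) ?_
    (by linarith) (by linarith) ?_ ?_) <;>
  simp only [IsFixedPt, reflect, sub_sub_cancel] <;> linarith [hfix.eq]

end Schemes

section Dense

variable {h : ℝ → ℝ} {a b x₀ : ℝ} (hc : Continuous h)
  (hmaps : MapsTo h (Icc a b) (Icc a b)) (hsub : Icc a b ⊆ limitSet h x₀)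
include hc hmaps hsub

theorem hasLScheme_of_lt_on_Ioc {x p : ℝ} (hax : a < x) (hfix : IsFixedPt h x) (hxp : x < p)
    (hpb : p ≤ b) (hup : ∀ t ∈ Ioc x p, x < h t) : HasLScheme h a b := by
  by_contra hno
  -- `T` is the largest `t` with `h > x` on `(x, t]`; without an L-scheme `[x, T]` is invariant
  set S := {t | t ≤ b ∧ ∀ s ∈ Ioc x t, x < h s}
  have hpS : p ∈ S := ⟨hpb, hup⟩
  have hSbdd : BddAbove S := ⟨b, fun t ht => ht.1⟩
  set T := sSup S
  have hpT : p ≤ T := le_csSup hSbdd hpS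
  have habove : ∀ s ∈ Ioo x T, x < h s := fun s hs => by
    obtain ⟨t, ht, hst⟩ := exists_lt_of_lt_csSup ⟨p, hpS⟩ hs.2
    exact ht.2 s ⟨hs.1, hst.le⟩
  have hbelow : ∀ s ∈ Ioo x T, h s ≤ T := fun s hs => by
    rcases le_or_gt (h s) s with hle | hlt
    · exact hle.trans hs.2.le
    have hsb : s ≤ b := hs.2.le.trans (csSup_le ⟨p, hpS⟩ fun t ht => ht.1)
    refine le_csSup hSbdd ⟨(hmaps ⟨by linarith [hs.1], hsb⟩).2, fun r hr => ?_⟩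
    rcases le_or_gt r s with hrs | hrs
    · exact habove r ⟨hr.1, hrs.trans_lt hs.2⟩
    · by_contra hr'
      exact hno (hasLScheme_of_cover hc hax.le (hr.2.trans (hmaps ⟨by linarith [hs.1], hsb⟩).2)
        hfix hs.1 hrs hr.2 (not_lt.1 hr'))
  have hmapsT : MapsTo h (Icc x T) (Icc x T) := by
    have hIco : MapsTo h (Ico x T) (Icc x T) := fun s hs => by
      rcases hs.1.eq_or_lt with rfl | hlt
      · rw [hfix.eq]; exact ⟨le_rfl, hs.2.le⟩
      · exact ⟨(habove s ⟨hlt, hs.2⟩).le, hbelow s ⟨hlt, hs.2⟩⟩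
    simpa [closure_Ico (hxp.trans_le hpT).ne] using hIco.closure hc
  obtain ⟨n, hn⟩ := (frequently_mem_Ioo hsub hax.le hxp hpb).exists
  have hsubT := hsub.trans
    (limitSet_subset_of_mapsTo isClosed_Icc hmapsT ⟨hn.1.le, hn.2.le.trans hpT⟩)
  exact absurd (hsubT (left_mem_Icc.2 (by linarith))).1 (not_le.2 hax)

theorem hasLScheme_of_lt_apply {x t : ℝ} (hax : a < x) (hfix : IsFixedPt h x) (hxt : x < t)
    (htb : t ≤ b) (ht : t < h t) : HasLScheme h a b := by
  set F := Icc x t ∩ {s | h s = s}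
  have hF : IsClosed F := isClosed_Icc.inter (isClosed_eq hc continuous_id)
  have hbdd : BddAbove F := ⟨t, fun s hs => hs.1.2⟩
  have hgF : sSup F ∈ F := hF.csSup_mem ⟨x, ⟨le_rfl, hxt.le⟩, hfix⟩ hbdd
  have hgt : sSup F < t := hgF.1.2.lt_of_ne fun he => ht.ne' (he ▸ hgF.2)
  have hnofix : ∀ s ∈ Ioc (sSup F) t, ¬IsFixedPt h s := fun s hs hfs =>
    (le_csSup hbdd (show s ∈ F from ⟨⟨hgF.1.1.trans hs.1.le, hs.2⟩, hfs⟩)).not_gt hs.1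
  refine hasLScheme_of_lt_on_Ioc hc hmaps hsub (hax.trans_le hgF.1.1) hgF.2 hgt htb
    fun s hs => hs.1.trans ?_
  exact isPreconnected_Ioc.lt_apply_of_lt_apply hc hnofix ⟨hgt, le_rfl⟩ hs ht

theorem hasLScheme_of_apply_lt {x t : ℝ} (hxb : x < b) (hfix : IsFixedPt h x) (htx : t < x)
    (hat : a ≤ t) (ht : h t < t) : HasLScheme h a b := by
  refine HasLScheme.of_reflect (hasLScheme_of_lt_apply (continuous_reflect hc)
    (mapsTo_reflect hmaps) (Icc_subset_limitSet_reflect hsub) (x := a + b - x) (t := a + b - t)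
    (by linarith) ?_ (by linarith) (by linarith) ?_)
  · simp only [IsFixedPt, reflect, sub_sub_cancel, hfix.eq]
  · simp only [reflect, sub_sub_cancel]; linarith

theorem not_forall_lt_apply (hab : a < b) : ¬∀ t ∈ Ioo a b, t < h t := fun hup => by
  obtain ⟨n, hn⟩ := (frequently_mem_Ioo hsub le_rfl hab le_rfl).exists
  set z := h^[n] x₀
  have hmapsz : MapsTo h (Icc z b) (Icc z b) := by
    have hIco : MapsTo h (Ico z b) (Icc z b) := fun s hs =>
      ⟨hs.1.trans (hup s ⟨hn.1.trans_le hs.1, hs.2⟩).le,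
        (hmaps ⟨by linarith [hn.1, hs.1], hs.2.le⟩).2⟩
    simpa [closure_Ico hn.2.ne] using hIco.closure hc
  have hsubz := hsub.trans (limitSet_subset_of_mapsTo isClosed_Icc hmapsz ⟨le_rfl, hn.2.le⟩)
  exact absurd (hsubz (left_mem_Icc.2 hab.le)).1 (not_le.2 hn.1)

theorem exists_isFixedPt_mem_Ioo (hab : a < b) : ∃ c ∈ Ioo a b, IsFixedPt h c := by
  by_contra! hno
  have hm : (a + b) / 2 ∈ Ioo a b := ⟨by linarith, by linarith⟩
  rcases lt_or_gt_of_ne (hno _ hm) with hlt | hgt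
  · refine not_forall_lt_apply (continuous_reflect hc) (mapsTo_reflect hmaps)
      (Icc_subset_limitSet_reflect hsub) hab fun t ht => ?_
    have hs : a + b - t ∈ Ioo a b := ⟨by linarith [ht.2], by linarith [ht.1]⟩
    have : h (a + b - t) < a + b - t := by
      by_contra! hle
      have := isPreconnected_Ioo.lt_apply_of_lt_apply hc hno hs hm
        (hle.lt_of_ne fun he => hno _ hs he.symm)
      linarith
    simp only [reflect]; linarith
  · exact not_forall_lt_apply hc hmaps hsub hab fun t ht =>
      isPreconnected_Ioo.lt_apply_of_lt_apply hc hno hm ht hgt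

theorem hasLScheme_of_isFixedPt_lt {x y : ℝ} (hax : a < x) (hxy : x < y) (hyb : y < b)
    (hx : IsFixedPt h x) (hy : IsFixedPt h y) : HasLScheme h a b := by
  obtain ⟨n, hn⟩ := (frequently_mem_Ioo hsub hax.le hxy hyb.le).exists
  have hnf : ¬IsFixedPt h (h^[n] x₀) := fun hf =>
    iterate_ne_of_isFixedPt (hax.trans (hxy.trans hyb)) hsub hf n rfl
  rcases lt_or_gt_of_ne hnf with hlt | hgt
  · exact hasLScheme_of_apply_lt hc hmaps hsub hyb hy hn.2 (hax.trans hn.1).le hlt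
  · exact hasLScheme_of_lt_apply hc hmaps hsub hax hx hn.1 (hn.2.trans hyb).le hgt

section NoLScheme

variable (hno : ¬HasLScheme h a b) {c : ℝ} (hcI : c ∈ Ioo a b) (hfc : IsFixedPt h c)
include hno hcI hfc

theorem eq_of_isFixedPt_of_not_hasLScheme {z : ℝ} (hz : z ∈ Ioo a b) (hfz : IsFixedPt h z) :
    z = c := by
  rcases lt_trichotomy z c with hlt | heq | hgt
  · exact (hno (hasLScheme_of_isFixedPt_lt hc hmaps hsub hz.1 hlt hcI.2 hfz hfc)).elim
  · exact heq
  · exact (hno (hasLScheme_of_isFixedPt_lt hc hmaps hsub hcI.1 hgt hz.2 hfc hfz)).elim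

theorem lt_apply_of_not_hasLScheme : ∀ t ∈ Ioo a c, t < h t := fun t ht => by
  rcases lt_trichotomy (h t) t with hlt | heq | hgt
  · exact (hno (hasLScheme_of_apply_lt hc hmaps hsub hcI.2 hfc ht.2 ht.1.le hlt)).elim
  · exact absurd (eq_of_isFixedPt_of_not_hasLScheme hc hmaps hsub hno hcI hfc
      ⟨ht.1, ht.2.trans hcI.2⟩ heq) ht.2.ne
  · exact hgt

theorem apply_lt_of_not_hasLScheme : ∀ t ∈ Ioo c b, h t < t := fun t ht => by
  rcases lt_trichotomy (h t) t with hlt | heq | hgt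
  · exact hlt
  · exact absurd (eq_of_isFixedPt_of_not_hasLScheme hc hmaps hsub hno hcI hfc
      ⟨hcI.1.trans ht.1, ht.2⟩ heq) ht.1.ne'
  · exact (hno (hasLScheme_of_lt_apply hc hmaps hsub hcI.1 hfc ht.1 ht.2.le hgt)).elim

end NoLScheme

theorem exists_apply_eq_right {s : ℝ} (has : a < s) (hsb : s < b)
    (hdown : ∀ t ∈ Ioo s b, h t < t) : ∃ r ∈ Icc a s, h r = b := by
  obtain ⟨r, hr, hmax⟩ := isCompact_Icc.exists_isMaxOn (nonempty_Icc.2 has.le) hc.continuousOn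
  refine ⟨r, hr, le_antisymm (hmaps ⟨hr.1, hr.2.trans hsb.le⟩).2 (not_lt.1 fun hlt => ?_)⟩
  -- otherwise `[a, max (h r) s]` would be an invariant interval missing `b`
  set M := max (h r) s
  have hMb : M < b := max_lt hlt hsb
  have hmapsM : MapsTo h (Icc a M) (Icc a M) := fun t ht => by
    refine ⟨(hmaps ⟨ht.1, ht.2.trans hMb.le⟩).1, ?_⟩
    rcases le_or_gt t s with hts | hst
    · exact (hmax ⟨ht.1, hts⟩).trans (le_max_left _ _)
    · exact (hdown t ⟨hst, ht.2.trans_lt hMb⟩).le.trans ht.2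
  obtain ⟨n, hn⟩ := (frequently_mem_Ioo hsub le_rfl has hsb.le).exists
  have hsubM := hsub.trans (limitSet_subset_of_mapsTo isClosed_Icc hmapsM
    ⟨hn.1.le, hn.2.le.trans (le_max_right _ _)⟩)
  exact absurd (hsubM (right_mem_Icc.2 (has.trans hsb).le)).2 (not_le.2 hMb)

theorem exists_apply_eq_left {s : ℝ} (has : a < s) (hsb : s < b)
    (hup : ∀ t ∈ Ioo a s, t < h t) : ∃ r ∈ Icc s b, h r = a := by
  obtain ⟨r, hr, hrb⟩ := exists_apply_eq_right (continuous_reflect hc) (mapsTo_reflect hmaps)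
    (Icc_subset_limitSet_reflect hsub) (s := a + b - s) (by linarith) (by linarith) fun t ht => by
      have := hup (a + b - t) ⟨by linarith [ht.2], by linarith [ht.1]⟩
      simp only [reflect]; linarith
  refine ⟨a + b - r, ⟨by linarith [hr.2], by linarith [hr.1]⟩, ?_⟩
  simp only [reflect] at hrb; linarith

theorem hasLScheme_of_isFixedPt_right (hab : a < b) (hfb : IsFixedPt h b) : HasLScheme h a b := by
  by_contra hno
  obtain ⟨c, hcI, hfc⟩ := exists_isFixedPt_mem_Ioo hc hmaps hsub hab
  obtain ⟨r, hr, hrb⟩ := exists_apply_eq_right hc hmaps hsub hcI.1 hcI.2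
    (apply_lt_of_not_hasLScheme hc hmaps hsub hno hcI hfc)
  obtain ⟨r', hr', hr'a⟩ := exists_apply_eq_left hc hmaps hsub hcI.1 hcI.2
    (lt_apply_of_not_hasLScheme hc hmaps hsub hno hcI hfc)
  have hrc : r < c := hr.2.lt_of_ne fun he => by rw [he, hfc.eq] at hrb; exact hcI.2.ne hrb
  have hcr' : c < r' := hr'.1.lt_of_ne' fun he => by rw [he, hfc.eq] at hr'a; exact hcI.1.ne' hr'a
  have hr'b : r' < b := hr'.2.lt_of_ne fun he => by rw [he, hfb.eq] at hr'a; exact hab.ne' hr'a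
  exact hno (hasLScheme_of_cover' hc hr.1 le_rfl hfb hr'b (hrc.trans hcr') (hr'a ▸ hr.1)
    hrb.ge)

theorem hasLScheme_of_isFixedPt_left (hab : a < b) (hfa : IsFixedPt h a) : HasLScheme h a b :=
  HasLScheme.of_reflect (hasLScheme_of_isFixedPt_right (continuous_reflect hc)
    (mapsTo_reflect hmaps) (Icc_subset_limitSet_reflect hsub) hab
    (by simp only [IsFixedPt, reflect, add_sub_cancel_right, hfa.eq, add_sub_cancel_left]))

end Dense

section FixedPoints

variable {f : ℝ → ℝ} {a b c u v : ℝ}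

theorem exists_isFixedPt_mem_Ioo_of_lt_apply (hc : Continuous f) (huv : u < v) (hu : u < f u)
    (hv : f v < v) : ∃ z ∈ Ioo u v, IsFixedPt f z := by
  obtain ⟨z, hz, hz0⟩ := intermediate_value_Ioo' huv.le (hc.sub continuous_id).continuousOn
    (show (0 : ℝ) ∈ Ioo (f v - v) (f u - u) from ⟨by linarith, by linarith⟩)
  exact ⟨z, hz, sub_eq_zero.1 hz0⟩

variable (hc : Continuous f) (huniq : ∀ z ∈ Ioo a b, IsFixedPt f z → z = c)
include hc huniq

theorem lt_of_apply_eq_right (hac : a < c) (hfb : f b < b) {ρ : ℝ} (hρb : ρ ≤ b)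
    (hfρ : f ρ = b) :    ρ < c := by
  by_contra! hcρ
  have hρb' : ρ < b := hρb.lt_of_ne fun he => by rw [he] at hfρ; exact hfb.ne hfρ
  obtain ⟨z, hz, hfz⟩ := exists_isFixedPt_mem_Ioo_of_lt_apply hc hρb' (hfρ ▸ hρb') hfb
  linarith [huniq z ⟨by linarith [hz.1], hz.2⟩ hfz, hz.1]

theorem lt_of_apply_eq_left (hcb : c < b) (hfa : a < f a) {σ : ℝ} (haσ : a ≤ σ)
    (hfσ : f σ = a) :    c < σ := by
  by_contra! hσc
  have haσ' : a < σ := haσ.lt_of_ne' fun he => by rw [he] at hfσ; exact hfa.ne' hfσ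
  obtain ⟨z, hz, hfz⟩ := exists_isFixedPt_mem_Ioo_of_lt_apply hc haσ' hfa (hfσ ▸ haσ')
  linarith [huniq z ⟨hz.1, by linarith [hz.2]⟩ hfz, hz.2]

theorem exists_mem_Icc_apply_apply_eq_left (hcI : c ∈ Ioo a b) (hfc : IsFixedPt f c)
    (hmaps : MapsTo f (Icc a b) (Icc a b)) (hfa : a < f a) (hfb : f b < b) {r r' : ℝ}
    (hr : r ∈ Icc a b) (hr' : r' ∈ Icc a b) (hfr : f (f r) = b) (hfr' : f (f r') = a) :
    ∃ t ∈ Icc a c, f (f t) = a := by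
  have hρ : f r < c := lt_of_apply_eq_right hc huniq hcI.1 hfb (hmaps hr).2 hfr
  have hσ : c < f r' := lt_of_apply_eq_left hc huniq hcI.2 hfa (hmaps hr').1 hfr'
  obtain ⟨t, ht, hft⟩ := intermediate_value_Icc' hρ.le hc.continuousOn
    (show f r' ∈ Icc (f c) (f (f r)) from
      ⟨by rw [hfc.eq]; exact hσ.le, by rw [hfr]; exact (hmaps hr').2⟩)
  exact ⟨t, ⟨(hmaps hr).1.trans ht.1, ht.2⟩, by rw [hft, hfr']⟩

end FixedPoints

theorem hasLScheme_iterate_two_of_isFixedPt {f : ℝ → ℝ} {a b c z : ℝ} (hc : Continuous f)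
    (hmaps : MapsTo f (Icc a b) (Icc a b)) (hcI : c ∈ Ioo a b) (hfc : IsFixedPt f c)
    (hsub : Icc a b ⊆ limitSet (f^[2]) z) :
    HasLScheme (f^[2]) a b := by
  by_contra hno
  have hg := hc.iterate 2
  have hgmaps := hmaps.iterate 2
  have hgc := hfc.iterate 2
  have hab := hcI.1.trans hcI.2
  have hup := lt_apply_of_not_hasLScheme hg hgmaps hsub hno hcI hgc
  obtain ⟨r, hr, hgr⟩ := exists_apply_eq_right hg hgmaps hsub hcI.1 hcI.2
    (apply_lt_of_not_hasLScheme hg hgmaps hsub hno hcI hgc)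
  obtain ⟨r', hr', hgr'⟩ := exists_apply_eq_left hg hgmaps hsub hcI.1 hcI.2 hup
  have hrc : r < c := hr.2.lt_of_ne fun he => by rw [he, hgc.eq] at hgr; exact hcI.2.ne hgr
  have hcr' : c < r' := hr'.1.lt_of_ne' fun he => by rw [he, hgc.eq] at hgr'; exact hcI.1.ne' hgr'
  by_cases hga : IsFixedPt (f^[2]) a
  · have har : a < r := hr.1.lt_of_ne fun he => by rw [← he, hga.eq] at hgr; exact hab.ne hgr
    exact hno (hasLScheme_of_cover hg le_rfl hr'.2 hga har (hrc.trans hcr') (hgr ▸ hr'.2)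
      hgr'.le)
  by_cases hgb : IsFixedPt (f^[2]) b
  · have hr'b : r' < b := hr'.2.lt_of_ne fun he => by rw [he, hgb.eq] at hgr'; exact hab.ne' hgr'
    exact hno (hasLScheme_of_cover' hg hr.1 le_rfl hgb hr'b (hrc.trans hcr') (hgr' ▸ hr.1)
      hgr.ge)
  -- otherwise `f^[2]` sends a point of `(a, c)` to `a`, although it moves `(a, c)` upwards
  have huniq : ∀ t ∈ Ioo a b, IsFixedPt f t → t = c := fun t ht hft =>
    eq_of_isFixedPt_of_not_hasLScheme hg hgmaps hsub hno hcI hgc ht (hft.iterate 2)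
  have hfb : f b < b := (hmaps (right_mem_Icc.2 hab.le)).2.lt_of_ne fun he =>
    hgb (IsFixedPt.iterate he 2)
  have hfa : a < f a := (hmaps (left_mem_Icc.2 hab.le)).1.lt_of_ne' fun he =>
    hga (IsFixedPt.iterate he 2)
  obtain ⟨t, ht, hgt⟩ := exists_mem_Icc_apply_apply_eq_left hc huniq hcI hfc hmaps hfa hfb
    ⟨hr.1, hr.2.trans hcI.2.le⟩ ⟨hcI.1.le.trans hr'.1, hr'.2⟩ hgr hgr'
  have hta : a < t := ht.1.lt_of_ne fun he => hga (he ▸ hgt)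
  have htc : t < c := ht.2.lt_of_ne fun he => by rw [he] at hgt; exact hcI.1.ne' (hgc.eq ▸ hgt)
  have := hup t ⟨hta, htc⟩
  change t < f (f t) at this
  linarith

section Components

variable {h : ℝ → ℝ} {x : ℝ}

theorem exists_ne_mem_connectedComponentIn (hc : Continuous h) (hcpt : IsCompact (limitSet h x))
    {p q z : ℝ} (hpq : p < q) (hIoo : Ioo p q ⊆ limitSet h x) (hz : z ∈ limitSet h x)
    (hne : ∀ n, h^[n] x ≠ z) : ∃ w ∈ connectedComponentIn (limitSet h x) z, w ≠ z := by
  set Ω := limitSet h x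
  have hfreq : ∃ᶠ n in atTop, h^[n] x ∈ Ioo p q :=
    (hIoo (show (p + q) / 2 ∈ Ioo p q from ⟨by linarith, by linarith⟩)).frequently
      (Ioo_mem_nhds (by linarith) (by linarith))
  obtain ⟨k₀, hk₀⟩ := hfreq.exists
  obtain ⟨k₁, hk₀₁, hk₁⟩ := frequently_atTop.1 hfreq (k₀ + 1)
  have hΩ : ∀ n, MapsTo h^[n] Ω Ω := (mapsTo_limitSet hc).iterate
  -- `D` returns into itself after `m` steps, so its first `m` images cover `Ω`
  set D := connectedComponentIn Ω (h^[k₀] x)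
  have hIooD : Ioo p q ⊆ D := isPreconnected_Ioo.subset_connectedComponentIn hk₀ hIoo
  have hDk₀ : h^[k₀] x ∈ D := hIooD hk₀
  have hDcpt : IsCompact D := hcpt.of_isClosed_subset
    (isClosed_limitSet.connectedComponentIn _) (connectedComponentIn_subset _ _)
  set m := k₁ - k₀
  have hper : h^[m] '' D ⊆ D := by
    have := (hc.iterate m).continuousOn.image_connectedComponentIn_subset (hIoo hk₀)
    rw [← iterate_add_apply, show m + k₀ = k₁ by omega] at this
    exact this.trans ((connectedComponentIn_mono _ (hΩ m).image_subset).trans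
      (connectedComponentIn_eq (hIooD hk₁)).symm.subset)
  set K := ⋃ i ∈ Finset.range m, h^[i] '' D
  have hKmaps : MapsTo h K K := by
    intro t ht
    obtain ⟨i, hi, d, hd, rfl⟩ := mem_iUnion₂.1 ht
    rw [Finset.mem_range] at hi
    rcases (Nat.succ_le_of_lt hi).lt_or_eq with hlt | heq
    · exact mem_iUnion₂.2 ⟨i + 1, Finset.mem_range.2 hlt, d, hd, iterate_succ_apply' h i d⟩
    · refine mem_iUnion₂.2 ⟨0, Finset.mem_range.2 (by omega), ?_⟩
      exact ⟨_, hper ⟨d, hd, by rw [← heq, iterate_succ_apply']⟩, rfl⟩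
  have hKcl : IsClosed K := isClosed_biUnion_finset fun i _ => (hDcpt.image (hc.iterate i)).isClosed
  have hk₀K : h^[k₀] x ∈ K :=
    mem_iUnion₂.2 ⟨0, Finset.mem_range.2 (by omega), _, hDk₀, rfl⟩
  obtain ⟨i, -, d, hd, rfl⟩ := mem_iUnion₂.1 (limitSet_subset_of_mapsTo hKcl hKmaps hk₀K hz)
  refine ⟨h^[i] (h^[k₀] x), ?_, by rw [← iterate_add_apply]; exact hne _⟩
  refine (isPreconnected_connectedComponentIn.image _ (hc.iterate i).continuousOn
    ).subset_connectedComponentIn ⟨d, hd, rfl⟩ ?_ ⟨_, hDk₀, rfl⟩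
  exact (image_mono (connectedComponentIn_subset _ _)).trans (hΩ i).image_subset

theorem hasLScheme_of_mem_connectedComponentIn (hc : Continuous h) {a b : ℝ}
    (hΩ : limitSet h x ⊆ Icc a b) {z w : ℝ} (hfz : IsFixedPt h z)
    (hw : w ∈ connectedComponentIn (limitSet h x) z) (hwz : w ≠ z)
    (hnhds : limitSet h x ∉ 𝓝 z) : HasLScheme h a b := by
  set Ω := limitSet h x
  set J := connectedComponentIn Ω z
  have hzΩ : z ∈ Ω := connectedComponentIn_nonempty_iff.1 ⟨w, hw⟩
  have hzJ : z ∈ J := mem_connectedComponentIn hzΩ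
  have hJΩ : J ⊆ Ω := connectedComponentIn_subset _ _
  have hJbdd : BddBelow J ∧ BddAbove J :=
    ⟨⟨a, fun t ht => (hΩ (hJΩ ht)).1⟩, ⟨b, fun t ht => (hΩ (hJΩ ht)).2⟩⟩
  have hJcl : IsClosed J := isClosed_limitSet.connectedComponentIn z
  have hJ : J = Icc (sInf J) (sSup J) :=
    Subset.antisymm (fun t ht => ⟨csInf_le hJbdd.1 ht, le_csSup hJbdd.2 ht⟩)
      (isPreconnected_connectedComponentIn.ordConnected.out (hJcl.csInf_mem ⟨z, hzJ⟩ hJbdd.1)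
        (hJcl.csSup_mem ⟨z, hzJ⟩ hJbdd.2))
  set A := sInf J
  set B := sSup J
  have hzAB : z ∈ Icc A B := hJ ▸ hzJ
  have hwAB : w ∈ Icc A B := hJ ▸ hw
  have hAB : A < B := by
    rcases hwz.lt_or_gt with hlt | hlt <;> linarith [hzAB.1, hzAB.2, hwAB.1, hwAB.2]
  have hmaps : MapsTo h (Icc A B) (Icc A B) := by
    rw [← hJ]
    intro t ht
    have := hc.continuousOn.image_connectedComponentIn_subset hzΩ ⟨t, ht, rfl⟩
    rw [hfz.eq] at this
    exact connectedComponentIn_mono _ (mapsTo_limitSet hc).image_subset this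
  have hABΩ : Icc A B ⊆ Ω := hJ ▸ hJΩ
  obtain ⟨n, hn⟩ := (frequently_mem_Ioo hABΩ le_rfl hAB le_rfl).exists
  have hsub : Icc A B ⊆ limitSet h (h^[n] x) := by rwa [limitSet_iterate]
  have hmono : Icc A B ⊆ Icc a b := hABΩ.trans hΩ
  rcases hzAB.1.eq_or_lt with hzA | hAz
  · exact (hasLScheme_of_isFixedPt_left hc hmaps hsub hAB (hzA ▸ hfz)).mono hmono
  rcases hzAB.2.eq_or_lt with hzB | hzB
  · exact (hasLScheme_of_isFixedPt_right hc hmaps hsub hAB (hzB ▸ hfz)).mono hmono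
  · exact absurd (mem_of_superset (Ioo_mem_nhds hAz hzB) (Ioo_subset_Icc_self.trans hABΩ)) hnhds

end Components

theorem hasLScheme_iterate_two_of_subset_limitSet {f : ℝ → ℝ} {a b x : ℝ}
    (hc : Continuous f) (hmaps : MapsTo f (Icc a b) (Icc a b)) (hab : a < b) (hx : x ∈ Icc a b)
    (hsub : Icc a b ⊆ limitSet f x) : HasLScheme (f^[2]) a b := by
  obtain ⟨c, hcI, hfc⟩ := exists_isFixedPt_mem_Ioo hc hmaps hsub hab
  set Ω := limitSet (f^[2]) x
  set Ω' := limitSet (f^[2]) (f x)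
  have hcover : Icc a b ⊆ Ω ∪ Ω' := hsub.trans (limitSet_subset_union f x)
  by_cases hΩ : Icc a b ⊆ Ω
  · exact hasLScheme_iterate_two_of_isFixedPt hc hmaps hcI hfc hΩ
  by_cases hΩ' : Icc a b ⊆ Ω'
  · exact hasLScheme_iterate_two_of_isFixedPt hc hmaps hcI hfc hΩ'
  have hcomm : Semiconj f (f^[2]) (f^[2]) := Function.Commute.self_iterate f 2
  have hswap : MapsTo f Ω' Ω := by
    have := mapsTo_limitSet_of_semiconj (x := f x) hc hcomm
    rwa [show f (f x) = (f^[2])^[1] x from rfl, limitSet_iterate] at this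
  have hcΩ : c ∈ Ω ∧ c ∈ Ω' := by
    rcases hcover ⟨hcI.1.le, hcI.2.le⟩ with hcΩ | hcΩ'
    · exact ⟨hcΩ, hfc.eq ▸ mapsTo_limitSet_of_semiconj hc hcomm hcΩ⟩
    · exact ⟨hfc.eq ▸ hswap hcΩ', hcΩ'⟩
  have hΩI : Ω ⊆ Icc a b := limitSet_subset_of_mapsTo isClosed_Icc (hmaps.iterate 2) (n := 0) hx
  obtain ⟨w', hw'I, hw'⟩ := not_subset.1 hΩ'
  obtain ⟨p, q, hp, hpq, hq, hpqΩ'⟩ := exists_Ioo_subset_of_mem_nhds hab hw'I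
    (isClosed_limitSet.isOpen_compl.mem_nhds hw')
  have hIoo : Ioo p q ⊆ Ω := fun t ht =>
    (hcover ⟨hp.trans ht.1.le, ht.2.le.trans hq⟩).resolve_right (hpqΩ' ht)
  obtain ⟨w, hw, hwc⟩ := exists_ne_mem_connectedComponentIn (hc.iterate 2)
    (isCompact_Icc.of_isClosed_subset isClosed_limitSet hΩI) hpq hIoo hcΩ.1 fun n => by
      rw [← iterate_mul]; exact iterate_ne_of_isFixedPt hab hsub hfc _
  refine hasLScheme_of_mem_connectedComponentIn (hc.iterate 2) hΩI (hfc.iterate 2) hw hwc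
    fun hnhds => hΩ ?_
  -- the orbit of `f x` enters the invariant set `Ω`, so `Ω' ⊆ Ω`
  obtain ⟨n, hn⟩ := (hcΩ.2.frequently hnhds).exists
  exact hcover.trans (union_subset le_rfl
    (limitSet_subset_of_mapsTo isClosed_limitSet (mapsTo_limitSet (hc.iterate 2)) hn))

theorem mapClusterPt_of_forall_exists_mem {u : ℕ → ℝ} {a b y : ℝ} (hab : a < b)
    (hu : ∀ V : Set ℝ, IsOpen V → (V ∩ Icc a b).Nonempty → ∃ n, u n ∈ V)
    (hy : y ∈ Icc a b) :
    MapClusterPt y atTop u := by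
  refine mapClusterPt_iff_frequently.2 fun s hs => frequently_atTop.2 fun N => ?_
  obtain ⟨p, q, hp, hpq, hq, hsub⟩ := exists_Ioo_subset_of_mem_nhds hab hy hs
  have hfin : (u '' Iio N).Finite := (finite_Iio N).image u
  obtain ⟨t, ht, htN⟩ := ((Ioo_infinite hpq).sdiff hfin).nonempty
  obtain ⟨n, hn⟩ := hu _ (isOpen_Ioo.sdiff hfin.isClosed)
    ⟨t, ⟨ht, htN⟩, hp.trans ht.1.le, ht.2.le.trans hq⟩
  exact ⟨n, not_lt.1 fun hnN => hn.2 ⟨n, hnN, rfl⟩, hsub hn.1⟩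

theorem exists_Icc_subset_limitSet {h : ℝ → ℝ} (hc : Continuous h) (htrans : TransitiveOnI h) :
    ∃ x ∈ Icc (0 : ℝ) 1, Icc 0 1 ⊆ limitSet h x := by
  have : Nonempty (Icc (0 : ℝ) 1) := ⟨⟨0, left_mem_Icc.2 zero_le_one⟩⟩
  set 𝓑 := {B ∈ TopologicalSpace.countableBasis ℝ | (B ∩ Icc 0 1).Nonempty}
  set G : Set ℝ → Set (Icc (0 : ℝ) 1) := fun B => ⋃ n, (fun x => h^[n] x) ⁻¹' B
  have hGopen : ∀ B ∈ 𝓑, IsOpen (G B) := fun B hB => isOpen_iUnion fun n =>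
    (TopologicalSpace.isOpen_of_mem_countableBasis hB.1).preimage
      ((hc.iterate n).comp continuous_subtype_val)
  have hGdense : ∀ B ∈ 𝓑, Dense (G B) := fun B hB => by
    refine dense_iff_inter_open.2 fun U hU ⟨u, hu⟩ => ?_
    obtain ⟨U', hU', rfl⟩ := isOpen_induced_iff.1 hU
    obtain ⟨n, _, ⟨w, hw, rfl⟩, hwB⟩ := htrans U' B hU'
      (TopologicalSpace.isOpen_of_mem_countableBasis hB.1) ⟨u, hu, u.2⟩ hB.2
    exact ⟨⟨w, hw.2⟩, hw.1, mem_iUnion.2 ⟨n, hwB⟩⟩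
  obtain ⟨x, hx⟩ := (dense_biInter_of_isOpen hGopen
    ((TopologicalSpace.countable_countableBasis ℝ).mono (sep_subset _ _)) hGdense).nonempty
  refine ⟨x, x.2, fun y hy => mapClusterPt_of_forall_exists_mem zero_lt_one
    (fun V hV ⟨y, hyV, hy⟩ => ?_) hy⟩
  obtain ⟨B, hB, hyB, hBV⟩ :=
    (TopologicalSpace.isBasis_countableBasis ℝ).exists_subset_of_mem_open hyV hV
  obtain ⟨n, hn⟩ := mem_iUnion.1 (mem_iInter₂.1 hx B ⟨hB, y, hyB, hy⟩)
  exact ⟨n, hBV hn⟩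

theorem exists_continuous_eqOn_iterate {f : ℝ → ℝ} {a b : ℝ} (hab : a ≤ b)
    (hf : ContinuousOn f (Icc a b)) (hmaps : MapsTo f (Icc a b) (Icc a b)) :
    ∃ F : ℝ → ℝ, Continuous F ∧ ∀ n, EqOn (F^[n]) (f^[n]) (Icc a b) := by
  refine ⟨fun t => f (projIcc a b hab t), hf.comp_continuous
    (continuous_subtype_val.comp continuous_projIcc) fun t => (projIcc a b hab t).2, fun n => ?_⟩
  induction n with
  | zero => exact fun _ _ => rfl
  | succ n ih =>
    intro t ht
    rw [iterate_succ_apply, iterate_succ_apply, projIcc_of_mem _ ht]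
    exact ih (hmaps ht)

end IntervalDynamics

theorem stmt_14 (f : ℝ → ℝ) (hf : ContinuousOn f (Icc 0 1))
    (hmaps : MapsTo f (Icc 0 1) (Icc 0 1)) (htrans : TransitiveOnI f) :
    ∃ x ∈ Icc (0:ℝ) 1, ∃ y ∈ Icc (0:ℝ) 1, f^[2] x = x ∧
      ((f^[4] y ≤ x ∧ x < y ∧ y < f^[2] y) ∨ (f^[2] y < y ∧ y < x ∧ x ≤ f^[4] y)) := by
  obtain ⟨F, hF, hEq⟩ := IntervalDynamics.exists_continuous_eqOn_iterate zero_le_one hf hmaps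
  have hFmaps : MapsTo F (Icc 0 1) (Icc 0 1) := fun t ht => by
    rw [show F t = f t from hEq 1 ht]; exact hmaps ht
  have hFtrans : TransitiveOnI F := fun U V hU hV hUI hVI => by
    obtain ⟨n, hn⟩ := htrans U V hU hV hUI hVI
    exact ⟨n, by rwa [((hEq n).mono inter_subset_right).image_eq]⟩
  obtain ⟨x₀, hx₀, hsub⟩ := IntervalDynamics.exists_Icc_subset_limitSet hF hFtrans
  obtain ⟨x, hx, y, hy, hfix, hxy⟩ :=
    IntervalDynamics.hasLScheme_iterate_two_of_subset_limitSet hF hFmaps zero_lt_one hx₀ hsub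
  have h4 : F^[2] (F^[2] y) = f^[4] y := by rw [← iterate_add_apply]; exact hEq 4 hy
  rw [h4, hEq 2 hy] at hxy
  exact ⟨x, hx, y, hy, (hEq 2 hx).symm.trans hfix, hxy⟩
end

section
/- Let f : [0,1] → [0,1] be continuous. If x ∈ Ω(f) (the non-wandering set of f), then x lies in the closure of ⋃_{n≥1} f^{-n}(x), i.e., x is a limit of its own preimages. -/
/-!
If `x` is not a limit of its preimages, let `I` be the connected component of `x` in `[0,1]`
minus the preimages of `x`. Every iterate maps that complement into itself, so an iterate `f^n`
sending one point of `I` into `I` maps all of `I` into `I`; hence the return times of `I` are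
closed under differences and are the multiples of the least one, `p`. Then `h = f^p` maps `I`
into `I \ {x}`, hence to one side of `x`, where `closure I \ I` has at most one point. An
`h`-orbit in `closure I` reaching `x` after three steps would pass through that point twice in a
row, making it fixed, which is impossible. So the returns `h^k(N)` of a compact neighbourhood
`N ⊆ I` of `x` all lie in the compact set `h(N) ∪ h²(N) ∪ h³(closure I)`, which misses `x`,
contradicting `x ∈ Ω(f)`.
-/

open Set Function

/-- The non-wandering set of `f` on `[0,1]` (relative topology). -/
def NonWandering (f : ℝ → ℝ) : Set ℝ :=
  {z ∈ Icc (0:ℝ) 1 | ∀ U : Set ℝ, IsOpen U → z ∈ U →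
    ∃ n : ℕ, 0 < n ∧ (f^[n] '' (U ∩ Icc 0 1) ∩ U).Nonempty}

open Filter Topology Metric

theorem Nat.sInf_dvd_of_sub_mem {S : Set ℕ} (h0 : 0 ∉ S)
    (hsub : ∀ a ∈ S, ∀ b ∈ S, a < b → b - a ∈ S) {n : ℕ} (hn : n ∈ S) : sInf S ∣ n := by
  induction n using Nat.strong_induction_on with
  | _ n ih =>
    have hp : sInf S ∈ S := Nat.sInf_mem ⟨n, hn⟩
    have hp0 : sInf S ≠ 0 := fun h => h0 (h ▸ hp)
    rcases (Nat.sInf_le hn).lt_or_eq with hlt | heq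
    · have := ih (n - sInf S) (by omega) (hsub _ hp _ hn hlt)
      simpa [Nat.sub_add_cancel hlt.le] using Nat.dvd_add this (dvd_refl (sInf S))
    · exact heq ▸ dvd_refl _

theorem ContinuousOn.image_connectedComponentIn_subset_self {α : Type*} [TopologicalSpace α]
    {g : α → α} {F : Set α} {z : α} (hg : ContinuousOn g F) (hgF : MapsTo g F F)
    (hmeet : (g '' connectedComponentIn F z ∩ connectedComponentIn F z).Nonempty) :
    g '' connectedComponentIn F z ⊆ connectedComponentIn F z := by
  obtain ⟨_, ⟨y, hy, rfl⟩, hgy⟩ := hmeet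
  calc g '' connectedComponentIn F z = g '' connectedComponentIn F y := by
        rw [connectedComponentIn_eq hy]
    _ ⊆ connectedComponentIn (g '' F) (g y) :=
        hg.image_connectedComponentIn_subset (connectedComponentIn_subset _ _ hy)
    _ ⊆ connectedComponentIn F (g y) := connectedComponentIn_mono _ hgF.image_subset
    _ = connectedComponentIn F z := (connectedComponentIn_eq hgy).symm

theorem notMem_image_iterate_three {α : Type*} {h : α → α} {K I T : Set α} {x : α}
    (hK : MapsTo h K K) (hT : MapsTo h K T) (hsub : ((K \ I) ∩ T).Subsingleton) (hx : x ∈ I)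
    (hfree : ∀ z ∈ I, ∀ k, 1 ≤ k → h^[k] z ≠ x) : x ∉ h^[3] '' K := by
  rintro ⟨z, hz, hzx⟩
  have h₁ : h z ∈ (K \ I) ∩ T := ⟨⟨hK hz, fun hI => hfree _ hI 2 (by norm_num) hzx⟩, hT hz⟩
  have h₂ : h (h z) ∈ (K \ I) ∩ T :=
    ⟨⟨hK (hK hz), fun hI => hfree _ hI 1 le_rfl hzx⟩, hT (hK hz)⟩
  have hfix : h (h z) = h z := hsub h₂ h₁
  have hxz : x = h (h z) := hzx.symm.trans (congrArg h hfix)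
  exact h₂.1.2 (hxz ▸ hx)

theorem Set.OrdConnected.subset_Iio_or_subset_Ioi {α : Type*} [LinearOrder α] {s : Set α} {x : α}
    (hs : s.OrdConnected) (hx : x ∉ s) : s ⊆ Iio x ∨ s ⊆ Ioi x := by
  by_contra h
  simp only [not_or, not_subset, mem_Iio, mem_Ioi, not_lt] at h
  obtain ⟨⟨a, ha, hxa⟩, ⟨b, hb, hbx⟩⟩ := h
  exact hx (hs.out hb ha ⟨hbx, hxa⟩)

section OrderTopology

variable {α : Type*} [LinearOrder α] [TopologicalSpace α] [OrderTopology α] {I : Set α} {x : α}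

theorem Set.OrdConnected.lt_and_lt_of_mem_closure_diff (hI : I.OrdConnected) (hx : x ∈ I)
    {y z : α} (hy : y ∈ closure I \ I) (hz : z ∈ closure I \ I) (hyz : y < z) : y < x ∧ x < z := by
  constructor
  · by_contra! hxy
    obtain ⟨i, hyi, hi⟩ := mem_closure_iff.1 hz.1 (Ioi y) isOpen_Ioi hyz
    exact hy.2 (hI.out hx hi ⟨hxy, hyi.le⟩)
  · by_contra! hzx
    obtain ⟨i, hiz, hi⟩ := mem_closure_iff.1 hy.1 (Iio z) isOpen_Iio hyz
    exact hz.2 (hI.out hi hx ⟨hiz.le, hzx⟩)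

theorem Set.OrdConnected.subsingleton_closure_diff_inter_Iic (hI : I.OrdConnected) (hx : x ∈ I) :
    ((closure I \ I) ∩ Iic x).Subsingleton := by
  rintro y ⟨hy, hyx⟩ z ⟨hz, hzx⟩
  by_contra hne
  rcases lt_or_gt_of_ne hne with h | h
  · exact (hI.lt_and_lt_of_mem_closure_diff hx hy hz h).2.not_ge hzx
  · exact (hI.lt_and_lt_of_mem_closure_diff hx hz hy h).2.not_ge hyx

theorem Set.OrdConnected.subsingleton_closure_diff_inter_Ici (hI : I.OrdConnected) (hx : x ∈ I) :
    ((closure I \ I) ∩ Ici x).Subsingleton := by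
  rintro y ⟨hy, hyx⟩ z ⟨hz, hzx⟩
  by_contra hne
  rcases lt_or_gt_of_ne hne with h | h
  · exact (hI.lt_and_lt_of_mem_closure_diff hx hy hz h).1.not_ge hyx
  · exact (hI.lt_and_lt_of_mem_closure_diff hx hz hy h).1.not_ge hzx

theorem IsPreconnected.notMem_image_iterate_three_closure {h : α → α} (hI : IsPreconnected I)
    (hh : ContinuousOn h (closure I)) (hhI : MapsTo h I I) (hx : x ∈ I)
    (hfree : ∀ z ∈ I, ∀ k, 1 ≤ k → h^[k] z ≠ x) : x ∉ h^[3] '' closure I := by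
  have hxI : x ∉ h '' I := fun ⟨z, hz, hzx⟩ => hfree z hz 1 le_rfl hzx
  have hK := hhI.closure_of_continuousOn hh
  rcases (hI.image h (hh.mono subset_closure)).ordConnected.subset_Iio_or_subset_Ioi hxI
    with hs | hs
  · refine notMem_image_iterate_three hK ?_
      (hI.ordConnected.subsingleton_closure_diff_inter_Iic hx) hx hfree
    simpa only [closure_Iic] using
      (mapsTo_iff_image_subset.2 (hs.trans Iio_subset_Iic_self)).closure_of_continuousOn hh
  · refine notMem_image_iterate_three hK ?_
      (hI.ordConnected.subsingleton_closure_diff_inter_Ici hx) hx hfree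
    simpa only [closure_Ici] using
      (mapsTo_iff_image_subset.2 (hs.trans Ioi_subset_Ici_self)).closure_of_continuousOn hh

theorem IsPreconnected.eventually_notMem_image_iterate {h : α → α} {N : Set α}
    (hI : IsPreconnected I) (hIc : IsCompact (closure I)) (hh : ContinuousOn h (closure I))
    (hhI : MapsTo h I I) (hx : x ∈ I) (hfree : ∀ z ∈ I, ∀ k, 1 ≤ k → h^[k] z ≠ x)
    (hN : IsCompact N) (hNI : N ⊆ I) :
    ∀ᶠ z in 𝓝 x, ∀ k, 1 ≤ k → z ∉ h^[k] '' N := by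
  have hK := hhI.closure_of_continuousOn hh
  have hcont : ∀ k, ContinuousOn h^[k] N :=
    fun k => (hh.iterate hK k).mono (hNI.trans subset_closure)
  set C := h^[1] '' N ∪ h^[2] '' N ∪ h^[3] '' closure I
  have hC : IsCompact C := ((hN.image_of_continuousOn (hcont 1)).union
    (hN.image_of_continuousOn (hcont 2))).union (hIc.image_of_continuousOn (hh.iterate hK 3))
  have hxC : x ∉ C := by
    rintro ((⟨z, hz, hzx⟩ | ⟨z, hz, hzx⟩) | hx3)
    · exact hfree z (hNI hz) 1 le_rfl hzx
    · exact hfree z (hNI hz) 2 (by norm_num) hzx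
    · exact hI.notMem_image_iterate_three_closure hh hhI hx hfree hx3
  have hNC : ∀ k, 1 ≤ k → h^[k] '' N ⊆ C := by
    rintro k hk _ ⟨z, hz, rfl⟩
    match k, hk with
    | 1, _ => exact Or.inl (Or.inl ⟨z, hz, rfl⟩)
    | 2, _ => exact Or.inl (Or.inr ⟨z, hz, rfl⟩)
    | k + 3, _ =>
      refine Or.inr ⟨h^[k] z, hK.iterate k (subset_closure (hNI hz)), ?_⟩
      rw [← iterate_add_apply, add_comm]
  filter_upwards [hC.isClosed.isOpen_compl.mem_nhds hxC] with z hz k hk hzk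
  exact hz (hNC k hk hzk)

end OrderTopology

def iteratePreimages (f : ℝ → ℝ) (x : ℝ) : Set ℝ :=
  ⋃ n ∈ {n : ℕ | 1 ≤ n}, {y ∈ Icc (0:ℝ) 1 | f^[n] y = x}

def preimageGap (f : ℝ → ℝ) (x : ℝ) : Set ℝ :=
  connectedComponentIn (Icc 0 1 \ iteratePreimages f x) x

def returnTimes (f : ℝ → ℝ) (x : ℝ) : Set ℕ :=
  {n | 1 ≤ n ∧ (f^[n] '' preimageGap f x ∩ preimageGap f x).Nonempty}

section UnitInterval

variable {f : ℝ → ℝ} {x : ℝ}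

theorem mem_iteratePreimages {y : ℝ} :
    y ∈ iteratePreimages f x ↔ y ∈ Icc 0 1 ∧ ∃ n, 1 ≤ n ∧ f^[n] y = x := by
  simp only [iteratePreimages, mem_iUnion, mem_ofPred_eq, exists_prop]
  tauto

theorem iterate_ne_of_mem_preimageGap {z : ℝ} (hz : z ∈ preimageGap f x) {k : ℕ} (hk : 1 ≤ k) :
    f^[k] z ≠ x := fun hzx =>
  have hz' := connectedComponentIn_subset _ _ hz
  hz'.2 (mem_iteratePreimages.2 ⟨hz'.1, k, hk, hzx⟩)

theorem closure_preimageGap_subset : closure (preimageGap f x) ⊆ Icc 0 1 :=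
  closure_minimal ((connectedComponentIn_subset _ _).trans sdiff_subset) isClosed_Icc

theorem exists_closedBall_subset_preimageGap (hx : x ∈ Icc 0 1)
    (hxP : x ∉ closure (iteratePreimages f x)) :
    ∃ δ > 0, closedBall x δ ∩ Icc 0 1 ⊆ preimageGap f x := by
  obtain ⟨δ, hδ, hball⟩ :=
    nhds_basis_closedBall.mem_iff.1 (isClosed_closure.isOpen_compl.mem_nhds hxP)
  refine ⟨δ, hδ, ((convex_closedBall x δ).inter (convex_Icc 0 1)).isPreconnected
    |>.subset_connectedComponentIn ⟨mem_closedBall_self hδ.le, hx⟩ ?_⟩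
  exact fun y hy => ⟨hy.2, fun hyP => hball hy.1 (subset_closure hyP)⟩

theorem mapsTo_iterate_diff_iteratePreimages (hmaps : MapsTo f (Icc 0 1) (Icc 0 1)) (m : ℕ) :
    MapsTo f^[m] (Icc 0 1 \ iteratePreimages f x) (Icc 0 1 \ iteratePreimages f x) := by
  rintro y ⟨hy, hyP⟩
  refine ⟨hmaps.iterate m hy, fun h => hyP ?_⟩
  obtain ⟨-, n, hn, hnx⟩ := mem_iteratePreimages.1 h
  exact mem_iteratePreimages.2 ⟨hy, n + m, by omega, by rwa [iterate_add_apply]⟩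

theorem mapsTo_iterate_preimageGap (hf : ContinuousOn f (Icc 0 1))
    (hmaps : MapsTo f (Icc 0 1) (Icc 0 1)) {n : ℕ} (hn : n ∈ returnTimes f x) :
    MapsTo f^[n] (preimageGap f x) (preimageGap f x) :=
  mapsTo_iff_image_subset.2 <|
    ((hf.iterate hmaps n).mono sdiff_subset).image_connectedComponentIn_subset_self
      (mapsTo_iterate_diff_iteratePreimages hmaps n) hn.2

theorem sub_mem_returnTimes (hf : ContinuousOn f (Icc 0 1))
    (hmaps : MapsTo f (Icc 0 1) (Icc 0 1)) {a b : ℕ} (ha : a ∈ returnTimes f x)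
    (hb : b ∈ returnTimes f x) (hab : a < b) : b - a ∈ returnTimes f x := by
  obtain ⟨_, ⟨z, hz, rfl⟩, _⟩ := hb.2
  refine ⟨by omega, f^[b] z, ⟨f^[a] z, mapsTo_iterate_preimageGap hf hmaps ha hz, ?_⟩,
    mapsTo_iterate_preimageGap hf hmaps hb hz⟩
  rw [← iterate_add_apply, Nat.sub_add_cancel hab.le]

theorem sInf_returnTimes_dvd (hf : ContinuousOn f (Icc 0 1))
    (hmaps : MapsTo f (Icc 0 1) (Icc 0 1)) {n : ℕ} (hn : n ∈ returnTimes f x) :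
    sInf (returnTimes f x) ∣ n :=
  Nat.sInf_dvd_of_sub_mem (fun h0 => Nat.not_succ_le_zero 0 h0.1)
    (fun _ ha _ hb hab => sub_mem_returnTimes hf hmaps ha hb hab) hn

theorem mem_returnTimes_of_nonempty (hmaps : MapsTo f (Icc 0 1) (Icc 0 1)) {U : Set ℝ}
    (hU : U ∩ Icc 0 1 ⊆ preimageGap f x) {n : ℕ} (hn : 0 < n)
    (hne : (f^[n] '' (U ∩ Icc 0 1) ∩ U).Nonempty) : n ∈ returnTimes f x := by
  obtain ⟨_, ⟨y, hy, rfl⟩, hyU⟩ := hne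
  exact ⟨hn, _, mem_image_of_mem _ (hU hy), hU ⟨hyU, hmaps.iterate n hy.2⟩⟩

theorem eventually_notMem_image_iterate_mul (hf : ContinuousOn f (Icc 0 1))
    (hmaps : MapsTo f (Icc 0 1) (Icc 0 1)) {p : ℕ} (hp : p ∈ returnTimes f x) {N : Set ℝ}
    (hN : IsCompact N) (hNI : N ⊆ preimageGap f x) :
    ∀ᶠ z in 𝓝 x, ∀ k, 1 ≤ k → z ∉ f^[p * k] '' N := by
  obtain ⟨_, _, hz⟩ := hp.2
  have hxI : x ∈ preimageGap f x :=
    mem_connectedComponentIn (connectedComponentIn_nonempty_iff.1 ⟨_, hz⟩)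
  simp only [iterate_mul]
  refine isPreconnected_connectedComponentIn.eventually_notMem_image_iterate
    (isCompact_Icc.of_isClosed_subset isClosed_closure closure_preimageGap_subset)
    ((hf.iterate hmaps p).mono closure_preimageGap_subset)
    (mapsTo_iterate_preimageGap hf hmaps hp) hxI (fun z hz k hk => ?_) hN hNI
  rw [← iterate_mul]
  exact iterate_ne_of_mem_preimageGap hz (Nat.mul_pos hp.1 hk)

end UnitInterval

theorem stmt_18 (f : ℝ → ℝ) (hf : ContinuousOn f (Icc 0 1))
    (hmaps : MapsTo f (Icc 0 1) (Icc 0 1))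
    (x : ℝ) (hx : x ∈ NonWandering f) :
    x ∈ closure (⋃ n ∈ {n : ℕ | 1 ≤ n}, {y ∈ Icc (0:ℝ) 1 | f^[n] y = x}) := by
  by_contra hxP
  obtain ⟨δ, hδ, hN⟩ := exists_closedBall_subset_preimageGap hx.1 hxP
  have hball : ∀ r ≤ δ, ball x r ∩ Icc 0 1 ⊆ closedBall x δ ∩ Icc 0 1 := fun r hr =>
    inter_subset_inter_left _ (ball_subset_closedBall.trans (closedBall_subset_closedBall hr))
  obtain ⟨n₀, hn₀, hn₀U⟩ := hx.2 (ball x δ) isOpen_ball (mem_ball_self hδ)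
  set p := sInf (returnTimes f x)
  have hp : p ∈ returnTimes f x :=
    Nat.sInf_mem ⟨n₀, mem_returnTimes_of_nonempty hmaps ((hball δ le_rfl).trans hN) hn₀ hn₀U⟩
  obtain ⟨ε, hε, hU⟩ := eventually_nhds_iff_ball.1 <| eventually_notMem_image_iterate_mul hf hmaps
    hp ((isCompact_closedBall x δ).inter_right isClosed_Icc) hN
  obtain ⟨n, hn, hnU⟩ := hx.2 (ball x (min δ ε)) isOpen_ball (mem_ball_self (lt_min hδ hε))
  obtain ⟨k, rfl⟩ := sInf_returnTimes_dvd hf hmaps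
    (mem_returnTimes_of_nonempty hmaps ((hball _ (min_le_left _ _)).trans hN) hn hnU)
  obtain ⟨_, ⟨y, hy, rfl⟩, hyU⟩ := hnU
  exact hU _ (ball_subset_ball (min_le_right _ _) hyU) k (Nat.pos_of_mul_pos_left hn)
    ⟨y, hball _ (min_le_left _ _) hy, rfl⟩
end

section
/- Let f : [0,1] → [0,1] be continuous, and suppose there exists an interval K with f^m(K) ⊆ K for some m ≥ 1 such that K contains no periodic point of f in its interior. Then every point of the interior of K converges under iteration of f^m to an endpoint of the closure of K, and this endpoint is a periodic point of f; in particular every x in the interior of K has ω(x) equal to a cycle. -/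
/-!
On `interior K = (a, b)` the map `g = f^[m]` has no fixed point, so by the intermediate value
theorem `g y - y` has a constant sign there, say positive. Then `y ≤ g y` on `[a, b] = closure K`,
the `g`-orbit of `x` increases, and its limit is a fixed point of `g` in `[a, b]`; as it is not in
`(a, b)`, it is `b`. Finally, each residue class `f^[r + m q] x` tends to `f^[r] b`, so the
`ω`-limit set of `x` is the cycle of `b`.
-/

open Set Function Filter

/-- ω-limit set of a point under iteration of `f`. -/
def omegaSet (f : ℝ → ℝ) (x : ℝ) : Set ℝ :=
  omegaLimit atTop (fun n : ℕ => f^[n]) {x}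

open Topology

theorem Filter.tendsto_atTop_of_forall_tendsto_add_mul {β : Type*} {u : ℕ → β} {l : Filter β}
    {m : ℕ} (hm : 0 < m) (h : ∀ r < m, Tendsto (fun q => u (r + m * q)) atTop l) :
    Tendsto u atTop l := by
  intro S hS
  obtain ⟨N, hN⟩ := eventually_atTop.1 <|
    (eventually_all_finset (Finset.range m)).2 fun r hr => h r (Finset.mem_range.1 hr) hS
  refine eventually_atTop.2 ⟨m * N, fun n hn => ?_⟩
  rw [← Nat.mod_add_div n m]
  exact hN _ ((Nat.le_div_iff_mul_le hm).2 (by linarith)) _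
    (Finset.mem_range.2 (Nat.mod_lt _ hm))

section Iterate

variable {X : Type*} [TopologicalSpace X] {f : X → X} {s : Set X} {x y : X}

theorem isFixedPt_of_tendsto_iterate_of_continuousWithinAt [T2Space X]
    (hy : Tendsto (fun n => f^[n] x) atTop (𝓝 y)) (hf : ContinuousWithinAt f s y)
    (hs : ∀ n, f^[n] x ∈ s) : IsFixedPt f y := by
  refine tendsto_nhds_unique ((tendsto_add_atTop_iff_nat 1).1 ?_) hy
  simp only [iterate_succ' f]
  exact hf.tendsto.comp (tendsto_nhdsWithin_iff.2 ⟨hy, Eventually.of_forall hs⟩)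

theorem omegaLimit_iterate_eq_range_of_tendsto [RegularSpace X] [T1Space X] {e : X} {m : ℕ}
    (hf : ContinuousOn f s) (hs : MapsTo f s s) (hx : x ∈ s) (he : e ∈ s) (hm : 0 < m)
    (hper : IsPeriodicPt f m e) (hlim : Tendsto (fun q => (f^[m])^[q] x) atTop (𝓝 e)) :
    omegaLimit atTop (fun n => f^[n]) {x} = range fun n => f^[n] e := by
  have hsub (r : ℕ) : Tendsto (fun q => f^[r + m * q] x) atTop (𝓝 (f^[r] e)) := by
    simp only [iterate_add_apply, iterate_mul]
    exact (hf.iterate hs r e he).tendsto.comp <| tendsto_nhdsWithin_iff.2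
      ⟨hlim, Eventually.of_forall fun q => (hs.iterate m).iterate q hx⟩
  have hfin : (range fun n => f^[n] e).Finite :=
    ((finite_Iio m).image fun r => f^[r] e).subset <| range_subset_iff.2 fun n =>
      ⟨n % m, Nat.mod_lt n hm, hper.iterate_mod_apply n⟩
  ext y
  rw [mem_omegaLimit_singleton_iff_mapClusterPt]
  constructor
  · intro hy
    by_contra hy'
    have hnear : Tendsto (fun n => f^[n] x) atTop (𝓝ˢ (range fun n => f^[n] e)) :=
      tendsto_atTop_of_forall_tendsto_add_mul hm fun r _ =>
        (hsub r).mono_right (nhds_le_nhdsSet (mem_range_self r))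
    have hsep : Disjoint (𝓝 y) (𝓝ˢ (range fun n => f^[n] e)) :=
      disjoint_nhds_nhdsSet.2 (by rwa [hfin.isClosed.closure_eq])
    exact (ClusterPt.mono hy hnear).ne (disjoint_iff.1 hsep)
  · rintro ⟨r, rfl⟩
    refine MapClusterPt.of_comp ?_ (hsub r).mapClusterPt
    exact tendsto_atTop_mono (fun q => (Nat.le_mul_of_pos_left q hm).trans (Nat.le_add_left _ r))
      tendsto_id

end Iterate

section Order

variable {α : Type*} [TopologicalSpace α]

theorem IsPreconnected.forall_lt_map_or_forall_map_lt [LinearOrder α] [OrderClosedTopology α]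
    {s : Set α} {g : α → α} (hs : IsPreconnected s) (hg : ContinuousOn g s)
    (hfix : ∀ y ∈ s, g y ≠ y) : (∀ y ∈ s, y < g y) ∨ ∀ y ∈ s, g y < y := by
  by_contra! h
  obtain ⟨⟨y₁, hy₁, hle₁⟩, ⟨y₂, hy₂, hle₂⟩⟩ := h
  obtain ⟨z, hz, hgz⟩ := hs.intermediate_value₂ hy₂ hy₁ continuousOn_id hg hle₂ hle₁
  exact hfix z hz hgz.symm

variable [ConditionallyCompleteLinearOrder α] [OrderTopology α] [DenselyOrdered α]
  {g : α → α} {a b x : α}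

theorem tendsto_iterate_right_of_lt_map (hg : ContinuousOn g (Icc a b))
    (hmaps : MapsTo g (Icc a b) (Icc a b)) (hlt : ∀ y ∈ Ioo a b, y < g y) (hx : x ∈ Ioo a b) :
    IsFixedPt g b ∧ Tendsto (fun n => g^[n] x) atTop (𝓝 b) := by
  have hle : ∀ y ∈ Icc a b, y ≤ g y := by
    have hsub : closure (Ioo a b) ⊆ {y ∈ Icc a b | y ≤ g y} :=
      closure_minimal (fun y hy => ⟨Ioo_subset_Icc_self hy, (hlt y hy).le⟩)
        (isClosed_Icc.isClosed_le continuousOn_id hg)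
    rw [closure_Ioo (hx.1.trans hx.2).ne] at hsub
    exact fun y hy => (hsub hy).2
  have horbit (n : ℕ) : g^[n] x ∈ Icc a b := hmaps.iterate n (Ioo_subset_Icc_self hx)
  have hmono : Monotone fun n => g^[n] x := monotone_nat_of_le_succ fun n => by
    simpa only [iterate_succ_apply'] using hle _ (horbit n)
  have hlim := tendsto_atTop_ciSup hmono ⟨b, forall_mem_range.2 fun n => (horbit n).2⟩
  set L := ⨆ n, g^[n] x
  have hL : L ∈ Icc a b := isClosed_Icc.mem_of_tendsto hlim (Eventually.of_forall horbit)
  have hfixL : IsFixedPt g L :=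
    isFixedPt_of_tendsto_iterate_of_continuousWithinAt hlim (hg L hL) horbit
  have hLb : L = b := by
    refine hL.2.eq_of_not_lt fun hLb => (hlt L ⟨hx.1.trans_le ?_, hLb⟩).ne' hfixL
    exact hmono.ge_of_tendsto hlim 0
  exact ⟨hLb ▸ hfixL, hLb ▸ hlim⟩

theorem exists_tendsto_iterate_endpoint (hg : ContinuousOn g (Icc a b))
    (hmaps : MapsTo g (Icc a b) (Icc a b)) (hfix : ∀ y ∈ Ioo a b, g y ≠ y) (hx : x ∈ Ioo a b) :
    ∃ e, (e = a ∨ e = b) ∧ IsFixedPt g e ∧ Tendsto (fun n => g^[n] x) atTop (𝓝 e) := by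
  rcases isPreconnected_Ioo.forall_lt_map_or_forall_map_lt (hg.mono Ioo_subset_Icc_self) hfix
    with hup | hdown
  · exact ⟨b, Or.inr rfl, tendsto_iterate_right_of_lt_map hg hmaps hup hx⟩
  · refine ⟨a, Or.inl rfl, tendsto_iterate_right_of_lt_map (α := αᵒᵈ) (g := g)
      (a := OrderDual.toDual b) (b := OrderDual.toDual a) (x := OrderDual.toDual x) ?_ ?_ ?_ ?_⟩
    · rw [Icc_toDual]; exact hg
    · rw [Icc_toDual]; exact hmaps
    · rw [Ioo_toDual]; exact hdown
    · rw [Ioo_toDual]; exact hx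

end Order

theorem Set.OrdConnected.closure_eq_Icc {α : Type*} [TopologicalSpace α]
    [ConditionallyCompleteLinearOrder α] [OrderTopology α] [DenselyOrdered α] {K : Set α}
    (hK : K.OrdConnected) (hne : K.Nonempty) (hb : BddBelow K) (ha : BddAbove K) :
    closure K = Icc (sInf (closure K)) (sSup (closure K)) :=
  eq_Icc_csInf_csSup_of_connected_bdd_closed ⟨hne.closure, hK.isPreconnected.closure⟩
    (bddBelow_closure.2 hb) (bddAbove_closure.2 ha) isClosed_closure

theorem Set.OrdConnected.interior_eq_Ioo {K : Set ℝ} (hK : K.OrdConnected)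
    (hint : (interior K).Nonempty) (hb : BddBelow K) (ha : BddAbove K) :
    interior K = Ioo (sInf (closure K)) (sSup (closure K)) := by
  rw [← (convex_iff_ordConnected.2 hK).interior_closure_eq_interior_of_nonempty_interior hint]
  exact (congrArg interior (hK.closure_eq_Icc (hint.mono interior_subset) hb ha)).trans
    interior_Icc

theorem stmt_19 (f : ℝ → ℝ) (hf : ContinuousOn f (Icc 0 1))
    (hmaps : MapsTo f (Icc 0 1) (Icc 0 1))
    (K : Set ℝ) (hK : K ⊆ Icc 0 1) (hKconn : K.OrdConnected)
    (m : ℕ) (hm : 1 ≤ m) (hinv : f^[m] '' K ⊆ K)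
    (hnoper : ∀ p ∈ interior K, ∀ n : ℕ, 0 < n → f^[n] p ≠ p) :
    ∀ x ∈ interior K, ∃ e : ℝ,
      (e = sInf (closure K) ∨ e = sSup (closure K)) ∧
      Tendsto (fun i : ℕ => f^[i * m] x) atTop (nhds e) ∧
      (∃ n : ℕ, 0 < n ∧ f^[n] e = e) ∧
      omegaSet f x = Set.range fun i : ℕ => f^[i] e := by
  intro x hx
  have hb : BddBelow K := bddBelow_Icc.mono hK
  have ha : BddAbove K := bddAbove_Icc.mono hK
  have hcl := hKconn.closure_eq_Icc ⟨x, interior_subset hx⟩ hb ha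
  have hint := hKconn.interior_eq_Ioo ⟨x, hx⟩ hb ha
  set a := sInf (closure K)
  set b := sSup (closure K)
  have hsub : Icc a b ⊆ Icc 0 1 := hcl ▸ closure_minimal hK isClosed_Icc
  have hg : ContinuousOn f^[m] (Icc a b) := (hf.iterate hmaps m).mono hsub
  have hgmaps : MapsTo f^[m] (Icc a b) (Icc a b) :=
    hcl ▸ (mapsTo_iff_image_subset.2 hinv).closure_of_continuousOn (hcl ▸ hg)
  rw [hint] at hx
  obtain ⟨e, hend, hfix, hlim⟩ := exists_tendsto_iterate_endpoint hg hgmaps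
    (fun y hy => hnoper y (hint ▸ hy) m hm) hx
  have he : e ∈ Icc a b := by
    rcases hend with rfl | rfl
    exacts [left_mem_Icc.2 (hx.1.trans hx.2).le, right_mem_Icc.2 (hx.1.trans hx.2).le]
  refine ⟨e, hend, ?_, ⟨m, hm, hfix⟩, ?_⟩
  · simpa only [mul_comm, iterate_mul] using hlim
  · exact omegaLimit_iterate_eq_range_of_tendsto hf hmaps (hsub (Ioo_subset_Icc_self hx))
      (hsub he) hm hfix hlim
end
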